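/- For all partial multifunctions f : ⊆ (X₀,δ_{X₀}) ⇉ (Y₀,δ_{Y₀}), g : ⊆ (X₁,δ_{X₁}) ⇉ (Y₁,δ_{Y₁}), and h : ⊆ (U,δ_U) ⇉ (V,δ_V) on represented spaces, (f ⊓ h) ⊞ (g ⊓ h) ≤_sW (f ⊞ g) ⊓ h. -/

import Mathlib

attribute [local instance] Classical.propDecidable

namespace StrongWeihrauch

noncomputable section

/-! ### Cantor space, monotone approximations, and the evaluation map -/

/-- Cantor space `2^ω`; we identify subsets of `ω` with their characteristic functions. -/
abbrev Cantor : Type := ℕ → Bool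

/-- The coded triple `⟨n,s,i⟩`. -/
def tpl (n s i : ℕ) : ℕ := Nat.pair n (Nat.pair s i)

/-- A monotone approximation (Definition 3.1): every element has the form `⟨n,s,i⟩` with
`i < 2`; for each `n` there is at most one pair `(s,i)` with `⟨n,s,i⟩ ∈ a`; and the stages `s`
are strictly increasing in `n`. -/
def MonotoneApprox (a : Cantor) : Prop :=
  (∀ k, a k = true → ∃ n s i, i < 2 ∧ k = tpl n s i) ∧
  (∀ n s t i j, a (tpl n s i) = true → a (tpl n t j) = true → s = t ∧ i = j) ∧
  (∀ m n s t i j, a (tpl m s i) = true → a (tpl n t j) = true → m < n → s < t)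

/-- A total monotone approximation: every `n` gets a value. -/
def TotalMonotoneApprox (a : Cantor) : Prop :=
  MonotoneApprox a ∧ ∀ n, ∃ s i, i < 2 ∧ a (tpl n s i) = true

/-- The value of the evaluation map `e` on a (total) monotone approximation:
`eVal a n = i` iff `⟨n,s,i⟩ ∈ a` for some `s`. -/
def eVal (a : Cantor) : Cantor := fun n => decide (∃ s, a (tpl n s 1) = true)

/-- The evaluation map `e : ⊆ 2^ω → 2^ω`, the partial function whose domain is the set of
total monotone approximations `a`, with `e(a)(n) = i` iff `⟨n,s,i⟩ ∈ a` for some `s`. -/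
def evalMA : Cantor →. Cantor := fun a => ⟨TotalMonotoneApprox a, fun _ => eVal a⟩

/-! ### Turing functionals -/

/-- The oracle information available at stage `s`: the first `s` bits of `p`. -/
def initSeg (p : Cantor) (s : ℕ) : List Bool := (List.range s).map p

/-- A `{0,1}`-valued Turing functional on Cantor space, presented by a computable monotone
finite-prefix approximation: `approx σ n = some b` means that the computation on input `n`
with oracle prefix `σ` has converged, with output `b`. -/
structure TuringFunctional where
  approx : List Bool → ℕ → Option Bool
  computable : Computable₂ approx
  mono : ∀ σ τ n b, σ <+: τ → approx σ n = some b → approx τ n = some b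

namespace TuringFunctional

/-- `Φ^p(n)[s]↓`. -/
def ConvAt (Φ : TuringFunctional) (p : Cantor) (n s : ℕ) : Prop :=
  (Φ.approx (initSeg p s) n).isSome = true

/-- `s` is least such that `Φ^p(n)[s]↓`. -/
def LeastStage (Φ : TuringFunctional) (p : Cantor) (n s : ℕ) : Prop :=
  Φ.ConvAt p n s ∧ ∀ t, t < s → ¬ Φ.ConvAt p n t

/-- Convention 2.1: if `Φ^p(n)[s]↓` then `Φ^p(m)[s]↓` for all `m < n`, and for each `s`
there is at most one `n` for which `s` is least with `Φ^p(n)[s]↓`. -/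
def Convention (Φ : TuringFunctional) : Prop :=
  (∀ (p : Cantor) (s n m : ℕ), m < n → Φ.ConvAt p n s → Φ.ConvAt p m s) ∧
  (∀ (p : Cantor) (s n n' : ℕ), Φ.LeastStage p n s → Φ.LeastStage p n' s → n = n')

/-- The partial function `⊆ 2^ω → 2^ω` computed by `Φ`; it is defined at `p` exactly when
`Φ(p)` is total, in which case its value is the map `n ↦ Φ^p(n)`. -/
def eval (Φ : TuringFunctional) : Cantor →. Cantor :=
  fun p => ⟨∀ n, ∃ s b, Φ.approx (initSeg p s) n = some b,
    fun h n => (h n).choose_spec.choose⟩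

end TuringFunctional

/-- `a_{Φ(p)}`: the set of all `⟨n,s,i⟩` where `s` is least such that `Φ^p(n)[s]↓ = i`. -/
def approxSeq (Φ : TuringFunctional) (p : Cantor) : Cantor := fun k =>
  decide (∃ n s b, k = tpl n s (Bool.toNat b) ∧ Φ.LeastStage p n s ∧
    Φ.approx (initSeg p s) n = some b)

/-- Turing reducibility `q ≤_T p` on Cantor space. -/
def TuringLe (q p : Cantor) : Prop := ∃ Φ : TuringFunctional, Φ.eval p = Part.some q

/-! ### Pairing on Cantor space -/

/-- The effective join `⟨p,q⟩` on Cantor space. -/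
def pairC (p q : Cantor) : Cantor := fun n => if n % 2 = 0 then p (n / 2) else q (n / 2)

def leftC (r : Cantor) : Cantor := fun n => r (2 * n)

def rightC (r : Cantor) : Cantor := fun n => r (2 * n + 1)

/-- The singleton `{i} ⊆ ω` as an element of Cantor space. -/
def natSet (i : ℕ) : Cantor := fun n => decide (n = i)

/-- `⟨i,p⟩`, i.e. `⟨{i},p⟩`. -/
def inC (i : ℕ) (p : Cantor) : Cantor := pairC (natSet i) p

lemma leftC_pairC (p q : Cantor) : leftC (pairC p q) = p := by
  funext n
  have h1 : 2 * n % 2 = 0 := by omega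
  have h2 : 2 * n / 2 = n := by omega
  simp [leftC, pairC, h1, h2]

lemma rightC_pairC (p q : Cantor) : rightC (pairC p q) = q := by
  funext n
  have h1 : (2 * n + 1) % 2 = 1 := by omega
  have h2 : (2 * n + 1) / 2 = n := by omega
  simp [rightC, pairC, h1, h2]

lemma tpl_inj {n s i n' s' i' : ℕ} (h : tpl n s i = tpl n' s' i') :
    n = n' ∧ s = s' ∧ i = i' := by
  unfold tpl at h
  rw [Nat.pair_eq_pair] at h
  rcases h with ⟨h1, h2⟩
  rw [Nat.pair_eq_pair] at h2
  exact ⟨h1, h2.1, h2.2⟩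

lemma toNat_lt_two (b : Bool) : b.toNat < 2 := by cases b <;> decide

/-- Encoding of `q ∈ 2^ω` as a total monotone approximation evaluating to `q`. -/
def maEncode (q : Cantor) : Cantor := fun k => decide (∃ n, k = tpl n n (q n).toNat)

lemma maEncode_mem {q : Cantor} {k : ℕ} :
    maEncode q k = true ↔ ∃ n, k = tpl n n (q n).toNat := by
  simp [maEncode]

lemma maEncode_total (q : Cantor) : TotalMonotoneApprox (maEncode q) := by
  refine ⟨⟨?_, ?_, ?_⟩, ?_⟩
  · intro k hk
    obtain ⟨n, rfl⟩ := maEncode_mem.mp hk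
    exact ⟨n, n, (q n).toNat, toNat_lt_two _, rfl⟩
  · intro n s t i j h1 h2
    obtain ⟨m, hm⟩ := maEncode_mem.mp h1
    obtain ⟨m', hm'⟩ := maEncode_mem.mp h2
    obtain ⟨e1, e2, e3⟩ := tpl_inj hm
    obtain ⟨f1, f2, f3⟩ := tpl_inj hm'
    have hmm' : m = m' := by omega
    refine ⟨by omega, by rw [e3, f3, hmm']⟩
  · intro m n s t i j h1 h2 hmn
    obtain ⟨u, hu⟩ := maEncode_mem.mp h1
    obtain ⟨v, hv⟩ := maEncode_mem.mp h2
    obtain ⟨e1, e2, _⟩ := tpl_inj hu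
    obtain ⟨f1, f2, _⟩ := tpl_inj hv
    omega
  · intro n
    exact ⟨n, (q n).toNat, toNat_lt_two _, maEncode_mem.mpr ⟨n, rfl⟩⟩

lemma eVal_maEncode (q : Cantor) : eVal (maEncode q) = q := by
  funext n
  have hiff : (∃ s, maEncode q (tpl n s 1) = true) ↔ q n = true := by
    constructor
    · rintro ⟨s, hs⟩
      obtain ⟨m, hm⟩ := maEncode_mem.mp hs
      obtain ⟨e1, e2, e3⟩ := tpl_inj hm
      subst e1
      cases hq : q n
      · rw [hq] at e3; simp at e3
      · rfl
    · intro hq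
      refine ⟨n, maEncode_mem.mpr ⟨n, ?_⟩⟩
      rw [hq]
      rfl
  cases hq : q n
  · have hne : ¬ (∃ s, maEncode q (tpl n s 1) = true) := by
      intro h
      have ht := hiff.mp h
      rw [ht] at hq
      exact Bool.noConfusion hq
    simp [eVal, hne]
  · simp [eVal, hiff.mpr hq]

/-- An explicit non-(monotone approximation). -/
def badMA : Cantor := fun k => decide (k = tpl 0 0 0 ∨ k = tpl 0 1 0)

lemma badMA_not : ¬ TotalMonotoneApprox badMA := by
  rintro ⟨⟨-, h2, -⟩, -⟩
  have ha : badMA (tpl 0 0 0) = true := by simp [badMA]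
  have hb : badMA (tpl 0 1 0) = true := by simp [badMA]
  have := (h2 0 0 1 0 0 ha hb).1
  omega

/-! ### Represented spaces -/

/-- A represented space: a set `X` together with a partial surjection `δ : ⊆ 2^ω → X`. -/
structure RepSp : Type 1 where
  X : Type
  δ : Cantor →. X
  surj : ∀ x : X, ∃ p, x ∈ δ p

namespace RepSp

/-- The product representation of `X₀ × X₁`: `δ(⟨p₀,p₁⟩) = (δ₀(p₀), δ₁(p₁))`. -/
def prod (A B : RepSp) : RepSp where
  X := A.X × B.X
  δ := fun r => (A.δ (leftC r)).bind fun x => (B.δ (rightC r)).map fun y => (x, y)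
  surj := by
    rintro ⟨x, y⟩
    obtain ⟨p, hp⟩ := A.surj x
    obtain ⟨q, hq⟩ := B.surj y
    refine ⟨pairC p q, ?_⟩
    simp only [leftC_pairC, rightC_pairC, Part.mem_bind_iff]
    exact ⟨x, hp, Part.mem_map _ hq⟩

/-- The disjoint-union representation of `X₀ ⊔ X₁`: `δ(⟨i,p⟩) = ⟨i, δᵢ(p)⟩`. -/
def sum (A B : RepSp) : RepSp where
  X := A.X ⊕ B.X
  δ := fun r =>
    if leftC r = natSet 0 then (A.δ (rightC r)).map Sum.inl
    else if leftC r = natSet 1 then (B.δ (rightC r)).map Sum.inr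
    else Part.none
  surj := by
    rintro (x | y)
    · obtain ⟨p, hp⟩ := A.surj x
      refine ⟨inC 0 p, ?_⟩
      have e1 : leftC (inC 0 p) = natSet 0 := leftC_pairC _ _
      have e2 : rightC (inC 0 p) = p := rightC_pairC _ _
      simp only [e1, e2, if_pos rfl]
      exact Part.mem_map _ hp
    · obtain ⟨p, hp⟩ := B.surj y
      refine ⟨inC 1 p, ?_⟩
      have e1 : leftC (inC 1 p) = natSet 1 := leftC_pairC _ _
      have e2 : rightC (inC 1 p) = p := rightC_pairC _ _
      have hne : natSet 1 ≠ natSet 0 := by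
        intro h
        have := congrFun h 0
        simp [natSet] at this
      simp only [e1, e2, hne, if_neg, if_pos rfl, ite_false, ite_true]
      exact Part.mem_map _ hp

/-- The completion `Ŷ = Y ∪ {∞_Y}` (with `∞_Y` rendered as `none`), represented by
`δ_Ŷ(p) = δ_Y(e(p))` if `p` is a total monotone approximation with `e(p) ∈ dom(δ_Y)`, and
`δ_Ŷ(p) = ∞_Y` otherwise. -/
def hat (A : RepSp) : RepSp where
  X := Option A.X
  δ := fun p => Part.some (((evalMA p).bind A.δ).toOption)
  surj := by
    intro y
    match y with
    | none =>
        refine ⟨badMA, ?_⟩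
        rw [Part.mem_some_iff]
        have hd : ¬ ((evalMA badMA).bind A.δ).Dom := by
          rintro ⟨h1, -⟩
          exact badMA_not h1
        rw [eq_comm, Part.toOption_eq_none_iff]
        exact hd
    | some x =>
        obtain ⟨p, hp⟩ := A.surj x
        refine ⟨maEncode p, ?_⟩
        rw [Part.mem_some_iff, eq_comm, Part.toOption_eq_some_iff]
        refine Part.mem_bind_iff.mpr ?_
        refine ⟨p, ?_, hp⟩
        exact ⟨maEncode_total p, eVal_maEncode p⟩

end RepSp

/-! ### Partial multifunctions and the Weihrauch reducibilities -/

/-- A partial multifunction `f : ⊆ X ⇉ Y` between represented spaces: `f.f x` is the set of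
solutions of the instance `x`, and the domain of `f` is the set of `x` with `f.f x ≠ ∅`. -/
structure MFn : Type 1 where
  A : RepSp
  B : RepSp
  f : A.X → Set B.X

namespace MFn

/-- The coproduct `f ⊔ g`. -/
def sqcup (f g : MFn) : MFn where
  A := f.A.sum g.A
  B := f.B.sum g.B
  f := Sum.elim (fun x => Sum.inl '' f.f x) (fun y => Sum.inr '' g.f y)

/-- The meet `f ⊓ g`, with `(f ⊓ g)(⟨x,y⟩) = ({0} × f(x)) ∪ ({1} × g(y))` for
`x ∈ dom f`, `y ∈ dom g`. -/
def sqcap (f g : MFn) : MFn where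
  A := f.A.prod g.A
  B := f.B.sum g.B
  f := fun xy =>
    if (f.f xy.1).Nonempty ∧ (g.f xy.2).Nonempty then
      (Sum.inl '' f.f xy.1) ∪ (Sum.inr '' g.f xy.2)
    else ∅

/-- The join `f ⊞ g : ⊆ X₀ ⊔ X₁ ⇉ Ŷ₀ × Ŷ₁`, with `(f ⊞ g)(⟨0,x⟩) = f(x) × Ŷ₁` and
`(f ⊞ g)(⟨1,x⟩) = Ŷ₀ × g(x)`. -/
def boxplus (f g : MFn) : MFn where
  A := f.A.sum g.A
  B := (f.B.hat).prod (g.B.hat)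
  f := Sum.elim
    (fun x => (Option.some '' f.f x) ×ˢ (Set.univ : Set (Option g.B.X)))
    (fun y => (Set.univ : Set (Option f.B.X)) ×ˢ (Option.some '' g.f y))

end MFn

/-- `F ⊢ f`: the partial function `F : ⊆ 2^ω → 2^ω` is a realizer of `f`, i.e.
`δ_Y F(p) ∈ f δ_X(p)` for every `p ∈ dom(f δ_X)`. -/
def Realizes (F : Cantor →. Cantor) (f : MFn) : Prop :=
  ∀ p x, x ∈ f.A.δ p → (f.f x).Nonempty →
    ∃ q ∈ F p, ∃ y ∈ f.B.δ q, y ∈ f.f x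

/-- Composition of partial functions on Cantor space: `pcomp F G = F ∘ G`. -/
def pcomp (F G : Cantor →. Cantor) : Cantor →. Cantor := fun p => (G p).bind F

/-- Strong Weihrauch reducibility: `f ≤_sW g` iff there are Turing functionals `Φ, Ψ` with
`Ψ G Φ ⊢ f` for every `G ⊢ g`. -/
def sWLe (f g : MFn) : Prop :=
  ∃ Φ Ψ : TuringFunctional, ∀ G : Cantor →. Cantor, Realizes G g →
    Realizes (pcomp Ψ.eval (pcomp G Φ.eval)) f

/-- Strong Weihrauch equivalence. -/
def sWEq (f g : MFn) : Prop := sWLe f g ∧ sWLe g f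

/-- Weihrauch reducibility: `f ≤_W g` iff there are Turing functionals `Φ, Ψ` with
`Ψ⟨id, G Φ⟩ ⊢ f` for every `G ⊢ g`. -/
def wLe (f g : MFn) : Prop :=
  ∃ Φ Ψ : TuringFunctional, ∀ G : Cantor →. Cantor, Realizes G g →
    Realizes (fun p => (pcomp G Φ.eval p).bind fun q => Ψ.eval (pairC p q)) f

/-- Weihrauch equivalence. -/
def wEq (f g : MFn) : Prop := wLe f g ∧ wLe g f

/-- Cantor space as a represented space, with the identity representation. -/
def CantorSp : RepSp where
  X := Cantor
  δ := fun p => Part.some p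
  surj := fun p => ⟨p, Part.mem_some_iff.mpr rfl⟩

/-- A partial multifunction on Cantor space, viewed as a multifunction on represented
spaces via the identity representation. -/
def ofCantor (F : Cantor → Set Cantor) : MFn := ⟨CantorSp, CantorSp, F⟩

/-! ### Further definitions used in the statements -/

/-- `c` is an index for the Turing functional `Ψ`. -/
def codesTF (c : Nat.Partrec.Code) (Ψ : TuringFunctional) : Prop :=
  ∀ (σ : List Bool) (n : ℕ),
    c.eval (Nat.pair (Encodable.encode σ) n) = Part.some (Encodable.encode (Ψ.approx σ n))

/-- The multifunction `h` of Lemma 4.4: `h(⟨0,p⟩)` consists of all pairs `⟨a,q⟩` where `a`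
is a total monotone approximation with `e(a) ∈ F(p)`, and `h(⟨1,p⟩)` of all pairs `⟨q,a⟩`
where `a` is a total monotone approximation with `e(a) ∈ G(p)`. -/
def hJoin (F G : Cantor → Set Cantor) : Cantor → Set Cantor := fun r =>
  {z | leftC r = natSet 0 ∧
    ∃ a q, z = pairC a q ∧ TotalMonotoneApprox a ∧ eVal a ∈ F (rightC r)} ∪
  {z | leftC r = natSet 1 ∧
    ∃ q a, z = pairC q a ∧ TotalMonotoneApprox a ∧ eVal a ∈ G (rightC r)}

/-- A single-valued partial function on Cantor space, viewed as a partial multifunction on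
represented spaces (via the identity representation). -/
def pfnToM (F : Cantor →. Cantor) : MFn := ofCantor fun p => {q | q ∈ F p}

/-- The single-point partial function `{p} → {q}`. -/
def singleFn (p q : Cantor) : MFn := ofCantor fun r => if r = p then {q} else ∅

/-- `A` is Medvedev reducible to `B`. -/
def MedvedevLe (A B : Set Cantor) : Prop :=
  ∃ Φ : TuringFunctional, ∀ p ∈ B, ∃ q ∈ Φ.eval p, q ∈ A

/-- The all-zero sequence `0^ω`. -/
def zeroSeq : Cantor := fun _ => false

/-- `d_A : A → {0^ω}`. -/
def dFn (A : Set Cantor) : MFn := ofCantor fun p => if p ∈ A then {zeroSeq} else ∅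

/-- `A ⊔ B ⊆ 2^ω`: all `⟨i,p⟩` with `i < 2` and `p ∈ A` if `i = 0`, `p ∈ B` if `i = 1`. -/
def setSum (A B : Set Cantor) : Set Cantor :=
  {r | ∃ p ∈ A, r = inC 0 p} ∪ {r | ∃ p ∈ B, r = inC 1 p}

/-- `A × B ⊆ 2^ω`: all pairs `⟨p,q⟩` with `p ∈ A` and `q ∈ B`. -/
def setProd (A B : Set Cantor) : Set Cantor := {r | ∃ p ∈ A, ∃ q ∈ B, r = pairC p q}

/-- `p` is a name of an instance of `f`. -/
def domName (f : MFn) (p : Cantor) : Prop := ∃ x ∈ f.A.δ p, (f.f x).Nonempty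

/-- `q` is a name of a solution to the instance of `f` named by `p`. -/
def solName (f : MFn) (p q : Cantor) : Prop :=
  ∃ x ∈ f.A.δ p, ∃ y ∈ f.B.δ q, y ∈ f.f x

/-- Strong computable reducibility `f ≤_sc g`: every name `p` of an instance of `f`
computes a name `p'` of an instance of `g` such that every name of a solution to the
latter computes a name of a solution to the former. -/
def scLe (f g : MFn) : Prop :=
  ∀ p, domName f p → ∃ p', TuringLe p' p ∧ domName g p' ∧
    ∀ q, solName g p' q → ∃ z, TuringLe z q ∧ solName f p z

/-- Strong computable equivalence. -/
def scEq (f g : MFn) : Prop := scLe f g ∧ scLe g f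

/-! The reduction only rearranges names. A name `⟨i,⟨x,u⟩⟩` of an instance of
`(f ⊓ h) ⊞ (g ⊓ h)` is turned into the name `⟨⟨i,x⟩,u⟩` of an instance of `(f ⊞ g) ⊓ h`.
An answer to the latter is either a pair of completed answers of `f ⊞ g`, genuine on side `i`,
or an answer `v` of `h`. In the first case each component, a monotone approximation `a`, is
rewritten into an approximation of `⟨0,e(a)⟩`; this preserves and reflects totality, so a
genuine answer stays genuine and `∞` stays `∞`. In the second case `⟨1,v⟩` is placed on both
sides, where it solves both `f ⊓ h` and `g ⊓ h`. Both translations read finitely many bits at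
primitive recursive positions, so they are computed by Turing functionals. -/

lemma initSeg_length (p : Cantor) (s : ℕ) : (initSeg p s).length = s := by
  simp [initSeg]

lemma initSeg_getD (p : Cantor) {i s : ℕ} (h : i < s) :
    (initSeg p s).getD i false = p i := by
  simp [initSeg, List.getD_eq_getElem?_getD, List.getElem?_range h]

lemma initSeg_prefix (p : Cantor) {s t : ℕ} (h : s ≤ t) : initSeg p s <+: initSeg p t := by
  rw [show initSeg p s = (initSeg p t).take s by
    rw [initSeg, initSeg, ← List.map_take, List.take_range, min_eq_left h]]
  exact List.take_prefix _ _

lemma tpl_surjective (k : ℕ) : ∃ n s i, k = tpl n s i :=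
  ⟨k.unpair.1, k.unpair.2.unpair.1, k.unpair.2.unpair.2, by simp [tpl]⟩

lemma natSet_one_ne_zero : natSet 1 ≠ natSet 0 :=
  fun h => by simpa [natSet] using congrFun h 0

lemma Part.toOption_map {α β : Type*} (f : α → β) (o : Part α) [Decidable o.Dom]
    [Decidable (o.map f).Dom] : (o.map f).toOption = o.toOption.map f := by
  by_cases h : o.Dom
  · rw [Part.Dom.toOption h, Part.Dom.toOption (show (o.map f).Dom from h)]
    rfl
  · rw [Part.toOption_eq_none_iff.mpr h,
      Part.toOption_eq_none_iff.mpr (show ¬(o.map f).Dom from h)]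
    rfl

namespace TuringFunctional

lemma approx_unique (Φ : TuringFunctional) (p : Cantor) {n s₁ s₂ : ℕ} {b₁ b₂ : Bool}
    (h₁ : Φ.approx (initSeg p s₁) n = some b₁) (h₂ : Φ.approx (initSeg p s₂) n = some b₂) :
    b₁ = b₂ := by
  have e₁ := Φ.mono _ _ _ _ (initSeg_prefix p (le_max_left s₁ s₂)) h₁
  have e₂ := Φ.mono _ _ _ _ (initSeg_prefix p (le_max_right s₁ s₂)) h₂
  exact Option.some.inj (e₁.symm.trans e₂)

lemma eval_eq_some (Φ : TuringFunctional) {p q : Cantor}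
    (h : ∀ n, ∃ s, Φ.approx (initSeg p s) n = some (q n)) : Φ.eval p = Part.some q := by
  have hdom : ∀ n, ∃ s b, Φ.approx (initSeg p s) n = some b :=
    fun n => ⟨(h n).choose, q n, (h n).choose_spec⟩
  refine Part.eq_some_iff.mpr ⟨hdom, funext fun n => ?_⟩
  exact Φ.approx_unique p (hdom n).choose_spec.choose_spec (h n).choose_spec

end TuringFunctional

def TuringComputable (F : Cantor → Cantor) : Prop :=
  ∃ Φ : TuringFunctional, ∀ p, Φ.eval p = Part.some (F p)

def PrimrecOperator (F : Cantor → Cantor) : Prop :=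
  ∃ use : ℕ → ℕ, Primrec use ∧
    (∀ q q' n, (∀ i < use n, q i = q' i) → F q n = F q' n) ∧
    Primrec₂ fun (σ : List Bool) n => F (fun i => σ.getD i false) n

namespace PrimrecOperator

theorem turingComputable {F : Cantor → Cantor} (hF : PrimrecOperator F) :
    TuringComputable F := by
  obtain ⟨use, huse, hcont, hprim⟩ := hF
  let Φ : TuringFunctional :=
    { approx := fun σ n =>
        if use n ≤ σ.length then some (F (fun i => σ.getD i false) n) else none
      computable := by
        refine Primrec₂.to_comp (Primrec.ite ?_ (Primrec.option_some.comp hprim) (.const none))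
        exact Primrec.nat_le.comp (huse.comp .snd) (Primrec.list_length.comp .fst)
      mono := by
        intro σ τ n b hστ hσ
        split_ifs at hσ with hle
        rw [if_pos (hle.trans hστ.length_le), ← hσ, hcont]
        intro i hi
        obtain ⟨ρ, rfl⟩ := hστ
        exact List.getD_append _ _ _ _ (hi.trans_le hle) }
  refine ⟨Φ, fun p => Φ.eval_eq_some fun n => ⟨use n, ?_⟩⟩
  simp only [Φ, initSeg_length, le_refl, if_true]
  exact congrArg some (hcont _ _ n fun i hi => initSeg_getD p hi)

theorem const {c : ℕ → Bool} (hc : Primrec c) : PrimrecOperator fun _ n => c n :=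
  ⟨fun _ => 0, .const 0, fun _ _ _ _ => rfl, hc.comp .snd⟩

theorem id : PrimrecOperator fun q => q :=
  ⟨fun n => n + 1, .succ, fun _ _ n h => h n n.lt_succ_self, Primrec.list_getD false⟩

theorem reindex {F : Cantor → Cantor} {κ : ℕ → ℕ} (hF : PrimrecOperator F) (hκ : Primrec κ) :
    PrimrecOperator fun q n => F q (κ n) := by
  obtain ⟨use, huse, hcont, hprim⟩ := hF
  exact ⟨fun n => use (κ n), huse.comp hκ, fun q q' n h => hcont q q' (κ n) h,
    hprim.comp .fst (hκ.comp .snd)⟩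

theorem map₂ {F G : Cantor → Cantor} (op : Bool → Bool → Bool) (hF : PrimrecOperator F)
    (hG : PrimrecOperator G) : PrimrecOperator fun q n => op (F q n) (G q n) := by
  obtain ⟨u, hu, hFc, hFp⟩ := hF
  obtain ⟨v, hv, hGc, hGp⟩ := hG
  refine ⟨fun n => u n + v n, Primrec.nat_add.comp hu hv, fun q q' n h => ?_,
    (Primrec.dom_bool₂ op).comp₂ hFp hGp⟩
  dsimp only at h ⊢
  rw [hFc q q' n fun i hi => h i (by omega), hGc q q' n fun i hi => h i (by omega)]

theorem cond {B F G : Cantor → Cantor} (hB : PrimrecOperator B) (hF : PrimrecOperator F)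
    (hG : PrimrecOperator G) : PrimrecOperator fun q n => bif B q n then F q n else G q n := by
  obtain ⟨u, hu, hBc, hBp⟩ := hB
  obtain ⟨v, hv, hFc, hFp⟩ := hF
  obtain ⟨w, hw, hGc, hGp⟩ := hG
  refine ⟨fun n => u n + v n + w n, Primrec.nat_add.comp (Primrec.nat_add.comp hu hv) hw,
    fun q q' n h => ?_, Primrec.cond hBp hFp hGp⟩
  dsimp only at h ⊢
  rw [hBc q q' n fun i hi => h i (by omega), hFc q q' n fun i hi => h i (by omega),
    hGc q q' n fun i hi => h i (by omega)]

theorem leftC {F : Cantor → Cantor} (hF : PrimrecOperator F) :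
    PrimrecOperator fun q => leftC (F q) :=
  hF.reindex (Primrec.nat_mul.comp (.const 2) .id)

theorem rightC {F : Cantor → Cantor} (hF : PrimrecOperator F) :
    PrimrecOperator fun q => rightC (F q) :=
  hF.reindex (Primrec.succ.comp (Primrec.nat_mul.comp (.const 2) .id))

theorem pairC {F G : Cantor → Cantor} (hF : PrimrecOperator F) (hG : PrimrecOperator G) :
    PrimrecOperator fun q => pairC (F q) (G q) := by
  have hhalf : Primrec fun n : ℕ => n / 2 := Primrec.nat_div.comp .id (.const 2)
  have heven : Primrec fun n : ℕ => decide (n % 2 = 0) :=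
    (Primrec.eq.comp (Primrec.nat_mod.comp .id (.const 2)) (.const 0)).decide
  convert (const heven).cond (hF.reindex hhalf) (hG.reindex hhalf) using 3 with q n
  simp only [StrongWeihrauch.pairC, Bool.cond_decide]

end PrimrecOperator

theorem sWLe_of_tracked_maps {f g : MFn} {φ ψ : Cantor → Cantor} (hφ : TuringComputable φ)
    (hψ : TuringComputable ψ) (α : f.A.X → g.A.X) (β : g.B.X → f.B.X)
    (hα : ∀ p x, x ∈ f.A.δ p → α x ∈ g.A.δ (φ p))
    (hβ : ∀ q y, y ∈ g.B.δ q → β y ∈ f.B.δ (ψ q))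
    (hdom : ∀ x, (f.f x).Nonempty → (g.f (α x)).Nonempty)
    (hsol : ∀ x, ∀ y ∈ g.f (α x), β y ∈ f.f x) : sWLe f g := by
  obtain ⟨Φ, hΦ⟩ := hφ
  obtain ⟨Ψ, hΨ⟩ := hψ
  refine ⟨Φ, Ψ, fun G hG p x hx hne => ?_⟩
  obtain ⟨q, hq, y, hy, hyg⟩ := hG (φ p) (α x) (hα p x hx) (hdom x hne)
  refine ⟨ψ q, ?_, β y, hβ q y hy, hsol x y hyg⟩
  refine Part.mem_bind_iff.mpr ⟨q, Part.mem_bind_iff.mpr ⟨φ p, ?_, hq⟩, ?_⟩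
  · rw [hΦ]; exact Part.mem_some _
  · rw [hΨ]; exact Part.mem_some _

/-- From a monotone approximation of `r`, one of `inC 0 r`: the entry `⟨m,s,i⟩` becomes
`⟨2m+1,2s+1,i⟩`, and bit `2m` (bit `m` of the tag `{0}`) is committed at stage `2s`, just
before it. -/
def maInC0 (a : Cantor) : Cantor := fun k =>
  bif decide (k.unpair.1 % 2 = 1) then
    decide (k.unpair.2.unpair.1 % 2 = 1) &&
      a (tpl (k.unpair.1 / 2) (k.unpair.2.unpair.1 / 2) k.unpair.2.unpair.2)
  else
    (decide (k.unpair.2.unpair.1 % 2 = 0) &&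
      decide (k.unpair.2.unpair.2 = if k.unpair.1 = 0 then 1 else 0)) &&
    (a (tpl (k.unpair.1 / 2) (k.unpair.2.unpair.1 / 2) 0) ||
      a (tpl (k.unpair.1 / 2) (k.unpair.2.unpair.1 / 2) 1))

lemma maInC0_tpl {a : Cantor} {m t j : ℕ} :
    maInC0 a (tpl m t j) = true ↔
      (m % 2 = 1 ∧ t % 2 = 1 ∧ a (tpl (m / 2) (t / 2) j) = true) ∨
      (m % 2 = 0 ∧ t % 2 = 0 ∧ j = (if m = 0 then 1 else 0) ∧
        (a (tpl (m / 2) (t / 2) 0) = true ∨ a (tpl (m / 2) (t / 2) 1) = true)) := by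
  rcases Nat.mod_two_eq_zero_or_one m with hm | hm <;> simp [maInC0, tpl, hm, and_assoc]

lemma maInC0_odd {a : Cantor} {m s i : ℕ} :
    maInC0 a (tpl (2 * m + 1) (2 * s + 1) i) = a (tpl m s i) := by
  rw [Bool.eq_iff_iff, maInC0_tpl]
  constructor
  · rintro (⟨-, -, h⟩ | ⟨h, -⟩)
    · simpa [Nat.mul_add_div] using h
    · omega
  · intro h
    exact Or.inl ⟨by omega, by omega, by simpa [Nat.mul_add_div] using h⟩

lemma maInC0_spec {a : Cantor} {m t j : ℕ} (h : maInC0 a (tpl m t j) = true) :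
    t % 2 = m % 2 ∧ ∃ i, a (tpl (m / 2) (t / 2) i) = true ∧
      (m % 2 = 1 → i = j) ∧ (m % 2 = 0 → j = if m = 0 then 1 else 0) := by
  rcases maInC0_tpl.mp h with ⟨hm, ht, ha⟩ | ⟨hm, ht, hj, ha | ha⟩
  · exact ⟨by omega, j, ha, fun _ => rfl, by omega⟩
  · exact ⟨by omega, 0, ha, by omega, fun _ => hj⟩
  · exact ⟨by omega, 1, ha, by omega, fun _ => hj⟩

lemma monotoneApprox_maInC0 {a : Cantor} (ha : MonotoneApprox a) :
    MonotoneApprox (maInC0 a) := by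
  obtain ⟨hform, huniq, hincr⟩ := ha
  refine ⟨fun k hk => ?_, fun n s t i j h₁ h₂ => ?_, fun m n s t i j h₁ h₂ hmn => ?_⟩
  · obtain ⟨m, t, j, rfl⟩ := tpl_surjective k
    obtain ⟨-, i, hi, hodd, heven⟩ := maInC0_spec hk
    refine ⟨m, t, j, ?_, rfl⟩
    rcases Nat.mod_two_eq_zero_or_one m with hm | hm
    · rw [heven hm]; split <;> omega
    · obtain ⟨_, _, _, hi2, he⟩ := hform _ hi
      rw [← hodd hm, (tpl_inj he).2.2]
      exact hi2
  · obtain ⟨hp₁, i₁, ha₁, ho₁, he₁⟩ := maInC0_spec h₁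
    obtain ⟨hp₂, i₂, ha₂, ho₂, he₂⟩ := maInC0_spec h₂
    obtain ⟨hst, hi⟩ := huniq _ _ _ _ _ ha₁ ha₂
    rcases Nat.mod_two_eq_zero_or_one n with hn | hn
    · exact ⟨by omega, (he₁ hn).trans (he₂ hn).symm⟩
    · exact ⟨by omega, (ho₁ hn).symm.trans (hi.trans (ho₂ hn))⟩
  · obtain ⟨hp₁, i₁, ha₁, -⟩ := maInC0_spec h₁
    obtain ⟨hp₂, i₂, ha₂, -⟩ := maInC0_spec h₂
    rcases (Nat.div_le_div_right (c := 2) hmn.le).lt_or_eq with hlt | heq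
    · have := hincr _ _ _ _ _ _ ha₁ ha₂ hlt
      omega
    · rw [heq] at ha₁
      have := (huniq _ _ _ _ _ ha₁ ha₂).1
      omega

lemma MonotoneApprox.of_maInC0 {a : Cantor} (ha : MonotoneApprox (maInC0 a)) :
    MonotoneApprox a := by
  obtain ⟨hform, huniq, hincr⟩ := ha
  refine ⟨fun k hk => ?_, fun n s t i j h₁ h₂ => ?_, fun m n s t i j h₁ h₂ hmn => ?_⟩
  · obtain ⟨n, s, i, rfl⟩ := tpl_surjective k
    obtain ⟨_, _, _, hi, he⟩ := hform _ (maInC0_odd.trans hk)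
    exact ⟨n, s, i, (tpl_inj he).2.2 ▸ hi, rfl⟩
  · have := huniq _ _ _ _ _ (maInC0_odd.trans h₁) (maInC0_odd.trans h₂)
    omega
  · have := hincr _ _ _ _ _ _ (maInC0_odd.trans h₁) (maInC0_odd.trans h₂) (by omega)
    omega

theorem totalMonotoneApprox_maInC0_iff {a : Cantor} :
    TotalMonotoneApprox (maInC0 a) ↔ TotalMonotoneApprox a := by
  refine ⟨fun ⟨ha, htot⟩ => ⟨ha.of_maInC0, fun n => ?_⟩,
    fun ⟨ha, htot⟩ => ⟨monotoneApprox_maInC0 ha, fun n => ?_⟩⟩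
  · obtain ⟨t, j, hj, ht⟩ := htot (2 * n + 1)
    obtain ⟨-, i, hi, hodd, -⟩ := maInC0_spec ht
    exact ⟨t / 2, j, hj, by simpa [Nat.mul_add_div, ← hodd (by omega)] using hi⟩
  · obtain ⟨s, i, hi, hs⟩ := htot (n / 2)
    rcases Nat.mod_two_eq_zero_or_one n with hn | hn
    · refine ⟨2 * s, if n = 0 then 1 else 0, by split <;> omega,
        maInC0_tpl.mpr (Or.inr ⟨hn, by omega, rfl, ?_⟩)⟩
      obtain rfl | rfl : i = 0 ∨ i = 1 := by omega
      exacts [Or.inl (by simpa using hs), Or.inr (by simpa using hs)]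
    · refine ⟨2 * s + 1, i, hi, maInC0_tpl.mpr (Or.inl ⟨hn, by omega, ?_⟩)⟩
      simpa [Nat.mul_add_div] using hs

lemma eVal_maInC0 {a : Cantor} (ha : TotalMonotoneApprox a) :
    eVal (maInC0 a) = inC 0 (eVal a) := by
  funext n
  simp only [eVal, inC, pairC, natSet]
  split_ifs with hn
  · rw [decide_eq_decide]
    constructor
    · rintro ⟨t, ht⟩
      obtain ⟨-, -, -, -, heven⟩ := maInC0_spec ht
      have := heven hn
      split_ifs at this
      omega
    · intro h0
      obtain rfl : n = 0 := by omega
      obtain ⟨s, i, hi, hs⟩ := ha.2 0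
      refine ⟨2 * s, maInC0_tpl.mpr (Or.inr ⟨rfl, by omega, rfl, ?_⟩)⟩
      obtain rfl | rfl : i = 0 ∨ i = 1 := by omega
      exacts [Or.inl (by simpa using hs), Or.inr (by simpa using hs)]
  · obtain ⟨m, rfl⟩ : ∃ m, n = 2 * m + 1 := ⟨n / 2, by omega⟩
    rw [decide_eq_decide, show (2 * m + 1) / 2 = m by omega]
    constructor
    · rintro ⟨t, ht⟩
      obtain ⟨-, i, hi, hodd, -⟩ := maInC0_spec ht
      rw [← hodd (by omega)]
      exact ⟨t / 2, by simpa [Nat.mul_add_div] using hi⟩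
    · rintro ⟨s, hs⟩
      exact ⟨2 * s + 1, maInC0_odd.trans hs⟩

lemma evalMA_maInC0 (a : Cantor) : evalMA (maInC0 a) = (evalMA a).map (inC 0) :=
  Part.ext' totalMonotoneApprox_maInC0_iff fun _ ha => eVal_maInC0 ha

lemma evalMA_maEncode (r : Cantor) : evalMA (maEncode r) = Part.some r :=
  Part.eq_some_iff.mpr ⟨maEncode_total r, eVal_maEncode r⟩

lemma maEncode_apply (w : Cantor) (k : ℕ) :
    maEncode w k = (decide (k.unpair.2.unpair.1 = k.unpair.1) &&
      bif w k.unpair.1 then decide (k.unpair.2.unpair.2 = 1)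
      else decide (k.unpair.2.unpair.2 = 0)) := by
  obtain ⟨m, t, j, rfl⟩ := tpl_surjective k
  cases hw : w m <;> simp [maEncode, tpl, hw, eq_comm]

theorem PrimrecOperator.maInC0 {A : Cantor → Cantor} (hA : PrimrecOperator A) :
    PrimrecOperator fun q => maInC0 (A q) := by
  have hm : Primrec fun k : ℕ => k.unpair.1 := Primrec.fst.comp Primrec.unpair
  have hs : Primrec fun k : ℕ => k.unpair.2.unpair.1 :=
    Primrec.fst.comp (Primrec.unpair.comp (Primrec.snd.comp Primrec.unpair))
  have hi : Primrec fun k : ℕ => k.unpair.2.unpair.2 :=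
    Primrec.snd.comp (Primrec.unpair.comp (Primrec.snd.comp Primrec.unpair))
  have hpar : ∀ {c : ℕ → ℕ} (b : ℕ), Primrec c → Primrec fun k => decide (c k % 2 = b) :=
    fun b hc => (Primrec.eq.comp (Primrec.nat_mod.comp hc (.const 2)) (.const b)).decide
  have hread : ∀ {c : ℕ → ℕ}, Primrec c →
      PrimrecOperator fun q k => A q (tpl (k.unpair.1 / 2) (k.unpair.2.unpair.1 / 2) (c k)) :=
    fun hc => hA.reindex (Primrec₂.natPair.comp (Primrec.nat_div.comp hm (.const 2))
      (Primrec₂.natPair.comp (Primrec.nat_div.comp hs (.const 2)) hc))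
  have htag : Primrec fun k : ℕ =>
      decide (k.unpair.2.unpair.2 = if k.unpair.1 = 0 then 1 else 0) :=
    (Primrec.eq.comp hi (Primrec.ite (Primrec.eq.comp hm (.const 0)) (.const 1)
      (.const 0))).decide
  exact (PrimrecOperator.const (hpar 1 hm)).cond
    ((PrimrecOperator.const (hpar 1 hs)).map₂ _ (hread hi))
    (((PrimrecOperator.const (hpar 0 hs)).map₂ _ (PrimrecOperator.const htag)).map₂ _
      ((hread (.const 0)).map₂ _ (hread (.const 1))))

theorem PrimrecOperator.maEncode {W : Cantor → Cantor} (hW : PrimrecOperator W) :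
    PrimrecOperator fun q => maEncode (W q) := by
  have hm : Primrec fun k : ℕ => k.unpair.1 := Primrec.fst.comp Primrec.unpair
  have hs : Primrec fun k : ℕ => k.unpair.2.unpair.1 :=
    Primrec.fst.comp (Primrec.unpair.comp (Primrec.snd.comp Primrec.unpair))
  have hi : ∀ b : ℕ, Primrec fun k : ℕ => decide (k.unpair.2.unpair.2 = b) := fun b =>
    (Primrec.eq.comp (Primrec.snd.comp (Primrec.unpair.comp (Primrec.snd.comp Primrec.unpair)))
      (.const b)).decide
  convert (PrimrecOperator.const (Primrec.eq.comp hs hm).decide).map₂ (· && ·)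
    ((hW.reindex hm).cond (.const (hi 1)) (.const (hi 0))) using 2 with q
  exact funext (maEncode_apply (W q))

namespace RepSp

lemma mem_prod_δ {A B : RepSp} {r : Cantor} {a : A.X} {b : B.X} :
    (a, b) ∈ (A.prod B).δ r ↔ a ∈ A.δ (leftC r) ∧ b ∈ B.δ (rightC r) := by
  refine Part.mem_bind_iff.trans ⟨?_, fun ⟨ha, hb⟩ => ⟨a, ha, Part.mem_map _ hb⟩⟩
  rintro ⟨x, hx, hy⟩
  obtain ⟨y, hy, ⟨⟩⟩ := (Part.mem_map_iff _).mp hy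
  exact ⟨hx, hy⟩

lemma inl_mem_sum_δ {A B : RepSp} {r : Cantor} {a : A.X} :
    Sum.inl a ∈ (A.sum B).δ r ↔ leftC r = natSet 0 ∧ a ∈ A.δ (rightC r) := by
  change Sum.inl a ∈ (if leftC r = natSet 0 then (A.δ (rightC r)).map Sum.inl
    else if leftC r = natSet 1 then (B.δ (rightC r)).map Sum.inr else Part.none) ↔ _
  split_ifs with h0 <;> simp [h0, Part.mem_map_iff]

lemma inr_mem_sum_δ {A B : RepSp} {r : Cantor} {b : B.X} :
    Sum.inr b ∈ (A.sum B).δ r ↔ leftC r = natSet 1 ∧ b ∈ B.δ (rightC r) := by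
  change Sum.inr b ∈ (if leftC r = natSet 0 then (A.δ (rightC r)).map Sum.inl
    else if leftC r = natSet 1 then (B.δ (rightC r)).map Sum.inr else Part.none) ↔ _
  split_ifs with h0 h1 <;> simp_all [Part.mem_map_iff, natSet_one_ne_zero.symm]

lemma sum_δ_inC0 (A B : RepSp) (r : Cantor) :
    (A.sum B).δ (inC 0 r) = (A.δ r).map Sum.inl := by
  simp only [RepSp.sum, inC, leftC_pairC, rightC_pairC, if_pos]

lemma evalMA_maInC0_bind_sum_δ (A B : RepSp) (a : Cantor) :
    (evalMA (maInC0 a)).bind (A.sum B).δ = ((evalMA a).bind A.δ).map Sum.inl := by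
  rw [evalMA_maInC0, Part.bind_map (g := (A.sum B).δ)]
  simp only [sum_δ_inC0]
  exact (Part.map_bind (fun r => A.δ r) _ Sum.inl).symm

lemma map_inl_mem_hat_sum_δ_maInC0 {A B : RepSp} {a : Cantor} {o : Option A.X}
    (ho : o ∈ A.hat.δ a) : o.map Sum.inl ∈ (A.sum B).hat.δ (maInC0 a) := by
  refine Part.mem_some_iff.mpr ?_
  rw [Part.mem_some_iff.mp ho, evalMA_maInC0_bind_sum_δ]
  exact (Part.toOption_map _ _).symm

lemma some_inr_mem_hat_sum_δ_maEncode {A B : RepSp} {z : Cantor} {b : B.X} (hb : b ∈ B.δ z) :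
    some (Sum.inr b) ∈ (A.sum B).hat.δ (maEncode (inC 1 z)) := by
  refine Part.mem_some_iff.mpr (Part.toOption_eq_some_iff.mpr ?_).symm
  rw [evalMA_maEncode]
  refine Part.mem_bind_iff.mpr ⟨inC 1 z, Part.mem_some _, inr_mem_sum_δ.mpr ?_⟩
  rw [inC, leftC_pairC, rightC_pairC]
  exact ⟨rfl, hb⟩

end RepSp

def answerMap {Y₀ Y₁ V : Type} :
    (Option Y₀ × Option Y₁) ⊕ V → Option (Y₀ ⊕ V) × Option (Y₁ ⊕ V) :=
  Sum.elim (fun o => (o.1.map Sum.inl, o.2.map Sum.inl))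
    fun v => (some (Sum.inr v), some (Sum.inr v))

/-- Sends a name `⟨i,⟨x,u⟩⟩` of a point of `(X₀ × U) ⊔ (X₁ × U)` to the name `⟨⟨i,x⟩,u⟩` of the
corresponding point of `(X₀ ⊔ X₁) × U`. -/
def distribName (p : Cantor) : Cantor :=
  pairC (pairC (leftC p) (leftC (rightC p))) (rightC (rightC p))

/-- Realizes `answerMap` on names; the tag `{i}` of `q` is read off its bit `0`. -/
def answerName (q : Cantor) : Cantor :=
  bif q 0 then pairC (maInC0 (leftC (rightC q))) (maInC0 (rightC (rightC q)))
  else pairC (maEncode (inC 1 (rightC q))) (maEncode (inC 1 (rightC q)))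

theorem primrecOperator_distribName : PrimrecOperator distribName :=
  (PrimrecOperator.id.leftC.pairC PrimrecOperator.id.rightC.leftC).pairC
    PrimrecOperator.id.rightC.rightC

theorem primrecOperator_answerName : PrimrecOperator answerName := by
  have hW : PrimrecOperator fun q => inC 1 (rightC q) :=
    (PrimrecOperator.const (c := natSet 1) (Primrec.eq.comp .id (.const 1)).decide).pairC
      PrimrecOperator.id.rightC
  convert (PrimrecOperator.id.reindex (.const 0)).cond
    (PrimrecOperator.id.rightC.leftC.maInC0.pairC PrimrecOperator.id.rightC.rightC.maInC0)
    (hW.maEncode.pairC hW.maEncode) using 2 with q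
  funext n
  unfold answerName
  cases q 0 <;> rfl

lemma mem_δ_distribName {A₀ A₁ C : RepSp} {p : Cantor} {x : (A₀.X × C.X) ⊕ (A₁.X × C.X)}
    (hx : x ∈ ((A₀.prod C).sum (A₁.prod C)).δ p) :
    (Equiv.sumProdDistrib _ _ _).symm x ∈ ((A₀.sum A₁).prod C).δ (distribName p) := by
  rcases x with ⟨a, c⟩ | ⟨a, c⟩
  · obtain ⟨htag, hac⟩ := RepSp.inl_mem_sum_δ.mp hx
    obtain ⟨ha, hc⟩ := RepSp.mem_prod_δ.mp hac
    refine RepSp.mem_prod_δ.mpr ⟨RepSp.inl_mem_sum_δ.mpr ?_, ?_⟩ <;>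
      simpa [distribName, leftC_pairC, rightC_pairC, htag]
  · obtain ⟨htag, hac⟩ := RepSp.inr_mem_sum_δ.mp hx
    obtain ⟨ha, hc⟩ := RepSp.mem_prod_δ.mp hac
    refine RepSp.mem_prod_δ.mpr ⟨RepSp.inr_mem_sum_δ.mpr ?_, ?_⟩ <;>
      simpa [distribName, leftC_pairC, rightC_pairC, htag]

lemma mem_δ_answerName {B₀ B₁ D : RepSp} {q : Cantor}
    {y : (Option B₀.X × Option B₁.X) ⊕ D.X} (hy : y ∈ ((B₀.hat.prod B₁.hat).sum D).δ q) :
    answerMap y ∈ ((B₀.sum D).hat.prod (B₁.sum D).hat).δ (answerName q) := by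
  rcases y with ⟨o₀, o₁⟩ | v
  · obtain ⟨htag, ho⟩ := RepSp.inl_mem_sum_δ.mp hy
    obtain ⟨ho₀, ho₁⟩ := RepSp.mem_prod_δ.mp ho
    have hq : q 0 = true := by simpa [leftC, natSet] using congrFun htag 0
    rw [answerName, hq, cond_true]
    refine RepSp.mem_prod_δ.mpr ⟨?_, ?_⟩
    · rw [leftC_pairC]
      exact RepSp.map_inl_mem_hat_sum_δ_maInC0 ho₀
    · rw [rightC_pairC]
      exact RepSp.map_inl_mem_hat_sum_δ_maInC0 ho₁
  · obtain ⟨htag, hv⟩ := RepSp.inr_mem_sum_δ.mp hy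
    have hq : q 0 = false := by simpa [leftC, natSet] using congrFun htag 0
    rw [answerName, hq, cond_false]
    refine RepSp.mem_prod_δ.mpr ⟨?_, ?_⟩
    · rw [leftC_pairC]
      exact RepSp.some_inr_mem_hat_sum_δ_maEncode hv
    · rw [rightC_pairC]
      exact RepSp.some_inr_mem_hat_sum_δ_maEncode hv

namespace MFn

variable {f g h : MFn}

lemma mem_sqcap_f {x : f.A.X} {y : g.A.X} {z : f.B.X ⊕ g.B.X} :
    z ∈ (f.sqcap g).f (x, y) ↔
      (f.f x).Nonempty ∧ (g.f y).Nonempty ∧ z ∈ Sum.inl '' f.f x ∪ Sum.inr '' g.f y := by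
  change z ∈ (if (f.f x).Nonempty ∧ (g.f y).Nonempty then
    Sum.inl '' f.f x ∪ Sum.inr '' g.f y else ∅) ↔ _
  split_ifs with h
  · simp [h]
  · simp only [Set.mem_empty_iff_false, false_iff]
    exact fun h' => h ⟨h'.1, h'.2.1⟩

lemma mem_boxplus_f_inl {x : f.A.X} {o : Option f.B.X × Option g.B.X} :
    o ∈ (f.boxplus g).f (Sum.inl x) ↔ o.1 ∈ some '' f.f x :=
  ⟨And.left, fun h => ⟨h, trivial⟩⟩

lemma mem_boxplus_f_inr {y : g.A.X} {o : Option f.B.X × Option g.B.X} :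
    o ∈ (f.boxplus g).f (Sum.inr y) ↔ o.2 ∈ some '' g.f y :=
  ⟨And.right, fun h => ⟨trivial, h⟩⟩

lemma boxplus_f_inl_nonempty {x : f.A.X} :
    ((f.boxplus g).f (Sum.inl x)).Nonempty ↔ (f.f x).Nonempty :=
  ⟨fun ⟨_, ho⟩ => let ⟨y, hy, _⟩ := mem_boxplus_f_inl.mp ho; ⟨y, hy⟩,
    fun ⟨y, hy⟩ => ⟨(some y, none), mem_boxplus_f_inl.mpr ⟨y, hy, rfl⟩⟩⟩

lemma boxplus_f_inr_nonempty {y : g.A.X} :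
    ((f.boxplus g).f (Sum.inr y)).Nonempty ↔ (g.f y).Nonempty :=
  ⟨fun ⟨_, ho⟩ => let ⟨z, hz, _⟩ := mem_boxplus_f_inr.mp ho; ⟨z, hz⟩,
    fun ⟨z, hz⟩ => ⟨(none, some z), mem_boxplus_f_inr.mpr ⟨z, hz, rfl⟩⟩⟩

lemma sqcap_f_nonempty {x : f.A.X} {y : g.A.X} :
    ((f.sqcap g).f (x, y)).Nonempty ↔ (f.f x).Nonempty ∧ (g.f y).Nonempty :=
  ⟨fun ⟨_, hz⟩ => (mem_sqcap_f.mp hz).imp_right And.left,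
    fun ⟨⟨z, hz⟩, hy⟩ => ⟨Sum.inl z, mem_sqcap_f.mpr ⟨⟨z, hz⟩, hy, Or.inl ⟨z, hz, rfl⟩⟩⟩⟩

lemma sqcap_boxplus_nonempty {x : (f.A.X × h.A.X) ⊕ (g.A.X × h.A.X)}
    (hx : (((f.sqcap h).boxplus (g.sqcap h)).f x).Nonempty) :
    (((f.boxplus g).sqcap h).f ((Equiv.sumProdDistrib _ _ _).symm x)).Nonempty := by
  rcases x with ⟨a, c⟩ | ⟨a, c⟩
  · obtain ⟨ha, hc⟩ := sqcap_f_nonempty.mp (boxplus_f_inl_nonempty.mp hx)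
    exact sqcap_f_nonempty.mpr ⟨boxplus_f_inl_nonempty.mpr ha, hc⟩
  · obtain ⟨ha, hc⟩ := sqcap_f_nonempty.mp (boxplus_f_inr_nonempty.mp hx)
    exact sqcap_f_nonempty.mpr ⟨boxplus_f_inr_nonempty.mpr ha, hc⟩

lemma answerMap_mem_sqcap_boxplus {x : (f.A.X × h.A.X) ⊕ (g.A.X × h.A.X)}
    {y : (Option f.B.X × Option g.B.X) ⊕ h.B.X}
    (hy : y ∈ ((f.boxplus g).sqcap h).f ((Equiv.sumProdDistrib _ _ _).symm x)) :
    answerMap y ∈ ((f.sqcap h).boxplus (g.sqcap h)).f x := by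
  rcases x with ⟨a, c⟩ | ⟨a, c⟩
  · obtain ⟨ha, hc, (⟨o, ho, rfl⟩ | ⟨v, hv, rfl⟩)⟩ := mem_sqcap_f.mp hy
    · obtain ⟨b, hb, hob⟩ := mem_boxplus_f_inl.mp ho
      refine mem_boxplus_f_inl.mpr
        ⟨Sum.inl b, mem_sqcap_f.mpr ⟨⟨b, hb⟩, hc, Or.inl ⟨b, hb, rfl⟩⟩, ?_⟩
      exact congrArg (Option.map Sum.inl) hob
    · exact mem_boxplus_f_inl.mpr ⟨Sum.inr v,
        mem_sqcap_f.mpr ⟨boxplus_f_inl_nonempty.mp ha, hc, Or.inr ⟨v, hv, rfl⟩⟩, rfl⟩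
  · obtain ⟨ha, hc, (⟨o, ho, rfl⟩ | ⟨v, hv, rfl⟩)⟩ := mem_sqcap_f.mp hy
    · obtain ⟨b, hb, hob⟩ := mem_boxplus_f_inr.mp ho
      refine mem_boxplus_f_inr.mpr
        ⟨Sum.inl b, mem_sqcap_f.mpr ⟨⟨b, hb⟩, hc, Or.inl ⟨b, hb, rfl⟩⟩, ?_⟩
      exact congrArg (Option.map Sum.inl) hob
    · exact mem_boxplus_f_inr.mpr ⟨Sum.inr v,
        mem_sqcap_f.mpr ⟨boxplus_f_inr_nonempty.mp ha, hc, Or.inr ⟨v, hv, rfl⟩⟩, rfl⟩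

end MFn

/-- Proposition 4.1(1): `(f ⊓ h) ⊞ (g ⊓ h) ≤_sW (f ⊞ g) ⊓ h`. -/
theorem stmt9 : ∀ f g h : MFn,
    sWLe ((f.sqcap h).boxplus (g.sqcap h)) ((f.boxplus g).sqcap h) := by
  intro f g h
  exact sWLe_of_tracked_maps primrecOperator_distribName.turingComputable
    primrecOperator_answerName.turingComputable (Equiv.sumProdDistrib _ _ _).symm answerMap
    (fun _ _ => mem_δ_distribName) (fun _ _ => mem_δ_answerName)
    (fun _ => MFn.sqcap_boxplus_nonempty) (fun _ _ => MFn.answerMap_mem_sqcap_boxplus)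

end

end StrongWeihrauch
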